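/- The constant mechanism defined by Q*_i(F,θ) = q* for every i = 1,…,K and T*(F,θ) = λ·u(q*) for all F ∈ 𝓕 and θ ∈ Θ, where q* = (u')⁻¹(cK/λ), is robustly optimal: it is incentive compatible and individually rational, and for every incentive compatible and individually rational mechanism (Q,T), inf_{F ∈ 𝓕} E_F[T(F,θ) − c·∑_{i=1}^K Q_i(F,θ)] ≤ inf_{F ∈ 𝓕} E_F[T*(F,θ) − c·∑_{i=1}^K Q*_i(F,θ)] = λ·u(q*) − cK·q*. -/

import Mathlib

/-!
Every constant mechanism leaves the buyer the same expected surplus under all `F ∈ 𝓕`, so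
`(Q*, T*)` is IC, IR and earns `λ u(q*) − cKq*` against every `F`. Conversely, against the
point mass at the symmetric type `(λ/K, …, λ/K)`, IR caps any mechanism's transfer by
`∑ᵢ (λ/K) u(Qᵢ)`, so its profit there is at most `∑ᵢ ((λ/K) u(Qᵢ) − c Qᵢ)`; by concavity
and the first-order condition `(λ/K) u'(q*) = c`, each summand is at most
`(λ/K) u(q*) − c q*`.
-/

open MeasureTheory Set Filter Topology

noncomputable section

/-- The type space `Θ = [0,1]^K`. -/
abbrev Theta (K : ℕ) := Fin K → Set.Icc (0:ℝ) 1

/-- The set `𝓕` of Borel probability measures on `Θ` whose mean total demand is `lam`. -/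
def Fcal (K : ℕ) (lam : ℝ) : Set (Measure (Theta K)) :=
  {F | IsProbabilityMeasure F ∧ ∫ θ, (∑ i, (θ i : ℝ)) ∂F = lam}

/-- The buyer's utility from allocation `q` and transfer `t` at type `θ`. -/
def util (K : ℕ) (u : ℝ → ℝ) (θ : Theta K) (q : Fin K → ℝ) (t : ℝ) : ℝ :=
  ∑ i, (θ i : ℝ) * u (q i) - t

/-- Incentive compatibility of a mechanism `(Q,T)`. -/
def IC (K : ℕ) (lam : ℝ) (u : ℝ → ℝ) (Q : Measure (Theta K) → Theta K → Fin K → ℝ)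
    (T : Measure (Theta K) → Theta K → ℝ) : Prop :=
  (∀ F ∈ Fcal K lam, ∀ θ θ' : Theta K,
      util K u θ (Q F θ') (T F θ') ≤ util K u θ (Q F θ) (T F θ)) ∧
  (∀ F ∈ Fcal K lam, ∀ F' ∈ Fcal K lam,
      ∫ θ, util K u θ (Q F' θ) (T F' θ) ∂F ≤ ∫ θ, util K u θ (Q F θ) (T F θ) ∂F)

/-- Individual rationality of a mechanism `(Q,T)`. -/
def IR (K : ℕ) (lam : ℝ) (u : ℝ → ℝ) (Q : Measure (Theta K) → Theta K → Fin K → ℝ)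
    (T : Measure (Theta K) → Theta K → ℝ) : Prop :=
  ∀ F ∈ Fcal K lam, 0 ≤ ∫ θ, util K u θ (Q F θ) (T F θ) ∂F

/-- The profit guarantee `inf_{F ∈ 𝓕} E_F[T(F,θ) - c·∑ᵢ Qᵢ(F,θ)]` (valued in `EReal`). -/
def guarantee (K : ℕ) (lam c : ℝ) (Q : Measure (Theta K) → Theta K → Fin K → ℝ)
    (T : Measure (Theta K) → Theta K → ℝ) : EReal :=
  ⨅ F ∈ Fcal K lam, ((∫ θ, (T F θ - c * ∑ i, Q F θ i) ∂F : ℝ) : EReal)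

lemma ConcaveOn.le_add_mul_sub_of_hasDerivAt {S : Set ℝ} {f : ℝ → ℝ} {x y f' : ℝ}
    (hf : ConcaveOn ℝ S f) (hx : x ∈ S) (hy : y ∈ S) (hd : HasDerivAt f f' x) :
    f y ≤ f x + f' * (y - x) := by
  rcases lt_trichotomy y x with hyx | rfl | hxy
  · have hs := hf.le_slope_of_hasDerivAt hy hx hyx hd
    rw [slope_def_field, le_div_iff₀ (sub_pos.2 hyx)] at hs
    linarith
  · simp
  · have hs := hf.slope_le_of_hasDerivAt hx hy hxy hd
    rw [slope_def_field, div_le_iff₀ (sub_pos.2 hxy)] at hs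
    linarith

lemma ConcaveOn.isMaxOn_sub_mul_of_hasDerivAt {S : Set ℝ} {f : ℝ → ℝ} {x f' : ℝ}
    (hf : ConcaveOn ℝ S f) (hx : x ∈ S) (hd : HasDerivAt f f' x) :
    IsMaxOn (fun y => f y - f' * y) S x := fun y hy => by
  have := hf.le_add_mul_sub_of_hasDerivAt hx hy hd
  show f y - f' * y ≤ f x - f' * x
  linarith

lemma integrable_sum_coord {K : ℕ} (F : Measure (Theta K)) [IsFiniteMeasure F] :
    Integrable (fun θ : Theta K => ∑ i, (θ i : ℝ)) F :=
  (continuous_finsetSum _ fun i _ => continuous_subtype_val.comp (continuous_apply i))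
    |>.integrable_of_hasCompactSupport (HasCompactSupport.of_compactSpace _)

-- The clamp `projIcc` is inactive when `0 < λ ≤ K`; it only keeps the definition total.
def symmetricType (K : ℕ) (lam : ℝ) : Theta K :=
  fun _ => projIcc 0 1 zero_le_one (lam / K)

lemma coe_symmetricType_apply {K : ℕ} {lam : ℝ} (h0 : 0 < lam) (hK : lam ≤ K) (i : Fin K) :
    (symmetricType K lam i : ℝ) = lam / K := by
  have hK0 : (0:ℝ) < K := h0.trans_le hK
  rw [symmetricType, projIcc_of_mem _ ⟨by positivity, (div_le_one hK0).2 hK⟩]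

lemma dirac_symmetricType_mem_Fcal {K : ℕ} {lam : ℝ} (h0 : 0 < lam) (hK : lam ≤ K) :
    Measure.dirac (symmetricType K lam) ∈ Fcal K lam := by
  refine ⟨inferInstance, ?_⟩
  simp only [integral_dirac, coe_symmetricType_apply h0 hK, Finset.sum_const, Finset.card_univ,
    Fintype.card_fin, nsmul_eq_mul]
  exact mul_div_cancel₀ _ (h0.trans_le hK).ne'

section ConstantMechanism

variable {K : ℕ} {lam : ℝ} {u : ℝ → ℝ} {Q : Measure (Theta K) → Theta K → Fin K → ℝ}
  {T : Measure (Theta K) → Theta K → ℝ} {q t : ℝ}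

lemma integral_util_const {F : Measure (Theta K)} (hF : F ∈ Fcal K lam) :
    ∫ θ, util K u θ (fun _ => q) t ∂F = lam * u q - t := by
  have := hF.1
  simp only [util, ← Finset.sum_mul]
  rw [integral_sub ((integrable_sum_coord F).mul_const _) (integrable_const _),
    integral_mul_const, hF.2, integral_const, probReal_univ, one_smul]

lemma IC.of_const (hQ : ∀ F θ i, Q F θ i = q) (hT : ∀ F θ, T F θ = t) : IC K lam u Q T := by
  refine ⟨fun F _ θ θ' => ?_, fun F _ F' _ => ?_⟩ <;> simp [util, hQ, hT]

lemma IR.of_const (hQ : ∀ F θ i, Q F θ i = q) (hT : ∀ F θ, T F θ = t) (ht : t ≤ lam * u q) :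
    IR K lam u Q T := fun F hF => by
  have hQF : Q F = fun _ _ => q := funext fun θ => funext (hQ F θ)
  simp only [hQF, hT, integral_util_const hF]
  linarith

lemma guarantee_of_const (c : ℝ) (hne : (Fcal K lam).Nonempty)
    (hQ : ∀ F θ i, Q F θ i = q) (hT : ∀ F θ, T F θ = t) :
    guarantee K lam c Q T = ((t - c * K * q : ℝ) : EReal) := by
  have hval : ∀ F ∈ Fcal K lam, ∫ θ, (T F θ - c * ∑ i, Q F θ i) ∂F = t - c * K * q := by
    intro F hF
    have := hF.1
    simp [hQ, hT, mul_comm, mul_left_comm]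
  unfold guarantee
  rw [iInf_congr fun F => iInf_congr fun hF => congrArg _ (hval F hF), biInf_const hne]

end ConstantMechanism

theorem guarantee_le_of_IR {K : ℕ} {c lam : ℝ} (hlam : 0 < lam) (hlamK : lam ≤ K)
    {u : ℝ → ℝ} {u'qstar qstar : ℝ} (hu_conc : ConcaveOn ℝ (Ici 0) u) (hqs_pos : 0 ≤ qstar)
    (hu_deriv : HasDerivAt u u'qstar qstar) (hqs : lam * u'qstar = c * K)
    {Q : Measure (Theta K) → Theta K → Fin K → ℝ} {T : Measure (Theta K) → Theta K → ℝ}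
    (hQ : ∀ F θ i, 0 ≤ Q F θ i) (hIR : IR K lam u Q T) :
    guarantee K lam c Q T ≤ ((lam * u qstar - c * K * qstar : ℝ) : EReal) := by
  have hK0 : (K : ℝ) ≠ 0 := (hlam.trans_le hlamK).ne'
  set θ₀ := symmetricType K lam
  set F₀ : Measure (Theta K) := Measure.dirac θ₀
  have hF₀ : F₀ ∈ Fcal K lam := dirac_symmetricType_mem_Fcal hlam hlamK
  have hmax : IsMaxOn (fun q => lam / K * u q - c * q) (Ici 0) qstar := by
    have h := (hu_conc.smul (by positivity : 0 ≤ lam / K)).isMaxOn_sub_mul_of_hasDerivAt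
      (mem_Ici.2 hqs_pos) (hu_deriv.const_mul (lam / K))
    rwa [show lam / K * u'qstar = c by field_simp; linarith] at h
  have hIR₀ : T F₀ θ₀ ≤ lam / K * ∑ i, u (Q F₀ θ₀ i) := by
    have h := hIR F₀ hF₀
    simp only [F₀, θ₀, integral_dirac, util, coe_symmetricType_apply hlam hlamK,
      ← Finset.mul_sum] at h
    exact sub_nonneg.1 h
  have hprofit : T F₀ θ₀ - c * ∑ i, Q F₀ θ₀ i ≤ lam * u qstar - c * K * qstar :=
    calc T F₀ θ₀ - c * ∑ i, Q F₀ θ₀ i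
        ≤ ∑ i, (lam / K * u (Q F₀ θ₀ i) - c * Q F₀ θ₀ i) := by
          rw [Finset.sum_sub_distrib, ← Finset.mul_sum, ← Finset.mul_sum]
          linarith
      _ ≤ Fintype.card (Fin K) • (lam / K * u qstar - c * qstar) :=
          Finset.sum_le_card_nsmul _ _ _ fun i _ => hmax (hQ F₀ θ₀ i)
      _ = lam * u qstar - c * K * qstar := by
          rw [Fintype.card_fin, nsmul_eq_mul]
          field_simp
  calc guarantee K lam c Q T
      ≤ ((∫ θ, (T F₀ θ - c * ∑ i, Q F₀ θ i) ∂F₀ : ℝ) : EReal) := iInf₂_le F₀ hF₀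
    _ ≤ _ := by rwa [integral_dirac, EReal.coe_le_coe_iff]

theorem stmt10_general
    (K : ℕ) (c lam : ℝ) (hlam : 0 < lam ∧ lam < K)
    (u u' : ℝ → ℝ)
    (hu_conc : StrictConcaveOn ℝ (Set.Ici 0) u)
    (hu_deriv : ∀ x, 0 < x → HasDerivAt u (u' x) x)
    (qstar : ℝ) (hqs_pos : 0 < qstar) (hqs : lam * u' qstar = c * K)
    (Qs : Measure (Theta K) → Theta K → Fin K → ℝ) (Ts : Measure (Theta K) → Theta K → ℝ)
    (hQs : ∀ F θ i, Qs F θ i = qstar) (hTs : ∀ F θ, Ts F θ = lam * u qstar) :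
    IC K lam u Qs Ts ∧ IR K lam u Qs Ts ∧
      (∀ Q T, (∀ F θ i, 0 ≤ Q F θ i) → IC K lam u Q T → IR K lam u Q T →
        guarantee K lam c Q T ≤ guarantee K lam c Qs Ts) ∧
      guarantee K lam c Qs Ts = ((lam * u qstar - c * K * qstar : ℝ) : EReal) := by
  obtain ⟨hlam0, hlamK⟩ := hlam
  have hg := guarantee_of_const c ⟨_, dirac_symmetricType_mem_Fcal hlam0 hlamK.le⟩ hQs hTs
  refine ⟨IC.of_const hQs hTs, IR.of_const hQs hTs le_rfl, fun Q T hQ _ hIR => ?_, hg⟩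
  rw [hg]
  exact guarantee_le_of_IR hlam0 hlamK.le hu_conc.concaveOn hqs_pos.le
    (hu_deriv qstar hqs_pos) hqs hQ hIR

/-- The constant mechanism `Q*ᵢ(F,θ) = q*`, `T*(F,θ) = λ·u(q*)`,
with `q* = (u')⁻¹(cK/λ)` (i.e. `λ·u'(q*) = cK`), is IC, IR and robustly optimal, and
its profit guarantee equals `λ·u(q*) − cK·q*`. -/
theorem stmt10
    (K : ℕ) (hK : 1 ≤ K) (c lam : ℝ) (hc : 0 < c) (hlam : 0 < lam ∧ lam < K)
    (u u' : ℝ → ℝ)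
    (hu_mono : StrictMonoOn u (Set.Ici 0))
    (hu_conc : StrictConcaveOn ℝ (Set.Ici 0) u)
    (hu_nonneg : ∀ x, 0 ≤ x → 0 ≤ u x)
    (hu_deriv : ∀ x, 0 < x → HasDerivAt u (u' x) x)
    (hu'_zero : Tendsto u' (nhdsWithin 0 (Set.Ioi 0)) atTop)
    (hu'_top : Tendsto u' atTop (nhds 0))
    (qstar : ℝ) (hqs_pos : 0 < qstar) (hqs : lam * u' qstar = c * K)
    (Qs : Measure (Theta K) → Theta K → Fin K → ℝ) (Ts : Measure (Theta K) → Theta K → ℝ)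
    (hQs : ∀ F θ i, Qs F θ i = qstar) (hTs : ∀ F θ, Ts F θ = lam * u qstar) :
    IC K lam u Qs Ts ∧ IR K lam u Qs Ts ∧
      (∀ Q T, (∀ F θ i, 0 ≤ Q F θ i) → IC K lam u Q T → IR K lam u Q T →
        guarantee K lam c Q T ≤ guarantee K lam c Qs Ts) ∧
      guarantee K lam c Qs Ts = ((lam * u qstar - c * K * qstar : ℝ) : EReal) :=
  stmt10_general K c lam hlam u u' hu_conc hu_deriv qstar hqs_pos hqs Qs Ts hQs hTs

end
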